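/- If G is a finite connected C4-free Helly graph of radius r ≥ 2 and diameter 2r, then the center C(G) is a clique. -/

import Mathlib

open SimpleGraph

variable {V : Type*}

/-- The ball of radius `r` centered at `v`. -/
def gBall (G : SimpleGraph V) (v : V) (r : ℕ) : Set V := {u | G.dist v u ≤ r}

/-- A graph is Helly if every (nonempty) family of pairwise intersecting balls
has a nonempty common intersection. -/
def IsHelly (G : SimpleGraph V) : Prop :=
  ∀ F : Set (V × ℕ), F.Nonempty →
    (∀ p ∈ F, ∀ q ∈ F, (gBall G p.1 p.2 ∩ gBall G q.1 q.2).Nonempty) →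
    (⋂ p ∈ F, gBall G p.1 p.2).Nonempty

/-- The eccentricity of a vertex. -/
noncomputable def ecc (G : SimpleGraph V) [Fintype V] (v : V) : ℕ :=
  Finset.univ.sup (fun u => G.dist v u)

/-- The radius of a graph. -/
noncomputable def grad (G : SimpleGraph V) [Fintype V] : ℕ :=
  sInf (Set.range (ecc G))

/-- The diameter of a graph. -/
noncomputable def gdiam (G : SimpleGraph V) [Fintype V] : ℕ :=
  Finset.univ.sup (ecc G)

/-- The center of a graph: vertices of minimum eccentricity. -/
noncomputable def gcenter (G : SimpleGraph V) [Fintype V] : Set V :=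
  {v | ecc G v = grad G}

/-- Distance from a vertex to a set of vertices. -/
noncomputable def distS (G : SimpleGraph V) (v : V) (S : Set V) : ℕ :=
  sInf (G.dist v '' S)

/-- The metric projection of a vertex onto a set of vertices. -/
noncomputable def proj (G : SimpleGraph V) (v : V) (S : Set V) : Set V :=
  {s ∈ S | G.dist v s = distS G v S}

/-- The slice `L(u,k,v)`: vertices on the metric interval from `u` to `v`
at distance `k` from `u`. -/
def gslice (G : SimpleGraph V) (u : V) (k : ℕ) (v : V) : Set V :=
  {w | G.dist u w = k ∧ G.dist u w + G.dist w v = G.dist u v}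

/-- A graph is `C₄`-free if it has no induced cycle on four vertices. -/
def C4Free (G : SimpleGraph V) : Prop :=
  ¬ ∃ a b c d : V, a ≠ b ∧ a ≠ c ∧ a ≠ d ∧ b ≠ c ∧ b ≠ d ∧ c ≠ d ∧
    G.Adj a b ∧ G.Adj b c ∧ G.Adj c d ∧ G.Adj d a ∧ ¬ G.Adj a c ∧ ¬ G.Adj b d

/-- The open neighbourhood of a set: vertices outside it with a neighbour in it. -/
def nbhdSet (G : SimpleGraph V) (C : Set V) : Set V :=
  {v | v ∉ C ∧ ∃ c ∈ C, G.Adj v c}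

/-!
Take a diametral pair `a, b`, so `d(a, b) = 2r`; every central vertex lies in the middle slice
`L(a, r, b)` of vertices at distance `r` from both. Two middle vertices `x, y` with `d(x, y) = 2`
are impossible: the Helly property yields a common neighbour `u` of `x` and `y` one step closer
to `b` and a common neighbour `v` one step closer to `a`; then `d(u, v) ≥ 2` and `x u y v` is an
induced `C₄`. If `d(x, y) = n + 1 ≥ 3`, the balls `N¹[y], Nⁿ[x], Nʳ[a], Nʳ[b]` pairwise meet,
and a common point is a middle vertex at distance `n` from `x`, so one descends to distance `2`.
-/

namespace SimpleGraph

variable {G : SimpleGraph V}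

theorem Connected.exists_dist_le_dist_le_of_dist_le_add (hconn : G.Connected) {u v : V}
    {m n : ℕ} (h : G.dist u v ≤ m + n) : ∃ w, G.dist u w ≤ m ∧ G.dist w v ≤ n := by
  obtain ⟨p, hp⟩ := hconn.exists_walk_length_eq_dist u v
  refine ⟨p.getVert m, (dist_le (p.take m)).trans ?_, (dist_le (p.drop m)).trans ?_⟩
  · simp [Walk.take_length]
  · rw [Walk.drop_length]
    omega

theorem Connected.adj_of_dist_le_one (hconn : G.Connected) {u v : V} (h : G.dist u v ≤ 1)
    (hne : u ≠ v) : G.Adj u v :=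
  dist_eq_one_iff_adj.mp (h.antisymm (hconn.pos_dist_of_ne hne))

theorem dist_le_one_of_eq_or_adj {u v : V} (h : u = v ∨ G.Adj u v) : G.dist u v ≤ 1 := by
  rcases h with rfl | hadj
  · simp
  · exact (dist_eq_one_iff_adj.mpr hadj).le

end SimpleGraph

open SimpleGraph

section Helly

variable {G : SimpleGraph V}

theorem IsHelly.exists_forall_dist_le (hH : IsHelly G) (hconn : G.Connected)
    {F : Set (V × ℕ)} (hF : F.Nonempty) (h : ∀ p ∈ F, ∀ q ∈ F, G.dist p.1 q.1 ≤ p.2 + q.2) :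
    ∃ w, ∀ p ∈ F, G.dist p.1 w ≤ p.2 := by
  obtain ⟨w, hw⟩ := hH F hF fun p hp q hq ↦ by
    obtain ⟨w, hpw, hwq⟩ := hconn.exists_dist_le_dist_le_of_dist_le_add (h p hp q hq)
    exact ⟨w, hpw, show G.dist q.1 w ≤ q.2 by rwa [SimpleGraph.dist_comm]⟩
  exact ⟨w, Set.mem_iInter₂.mp hw⟩

theorem IsHelly.exists_common_point_four (hH : IsHelly G) (hconn : G.Connected)
    {x₁ x₂ x₃ x₄ : V} {r₁ r₂ r₃ r₄ : ℕ}
    (h₁₂ : G.dist x₁ x₂ ≤ r₁ + r₂) (h₁₃ : G.dist x₁ x₃ ≤ r₁ + r₃)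
    (h₁₄ : G.dist x₁ x₄ ≤ r₁ + r₄) (h₂₃ : G.dist x₂ x₃ ≤ r₂ + r₃)
    (h₂₄ : G.dist x₂ x₄ ≤ r₂ + r₄) (h₃₄ : G.dist x₃ x₄ ≤ r₃ + r₄) :
    ∃ w, G.dist x₁ w ≤ r₁ ∧ G.dist x₂ w ≤ r₂ ∧ G.dist x₃ w ≤ r₃ ∧ G.dist x₄ w ≤ r₄ := by
  obtain ⟨w, hw⟩ := hH.exists_forall_dist_le hconn
    (F := {(x₁, r₁), (x₂, r₂), (x₃, r₃), (x₄, r₄)}) (by simp) (by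
      simp only [Set.mem_insert_iff, Set.mem_singleton_iff]
      rintro p (rfl | rfl | rfl | rfl) q (rfl | rfl | rfl | rfl)
      all_goals dsimp only
      all_goals first
        | simp
        | assumption
        | (rw [SimpleGraph.dist_comm, add_comm]; assumption))
  simp only [Set.mem_insert_iff, Set.mem_singleton_iff, forall_eq_or_imp, forall_eq] at hw
  exact ⟨w, hw⟩

theorem IsHelly.exists_common_point_three (hH : IsHelly G) (hconn : G.Connected)
    {x₁ x₂ x₃ : V} {r₁ r₂ r₃ : ℕ} (h₁₂ : G.dist x₁ x₂ ≤ r₁ + r₂)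
    (h₁₃ : G.dist x₁ x₃ ≤ r₁ + r₃) (h₂₃ : G.dist x₂ x₃ ≤ r₂ + r₃) :
    ∃ w, G.dist x₁ w ≤ r₁ ∧ G.dist x₂ w ≤ r₂ ∧ G.dist x₃ w ≤ r₃ := by
  obtain ⟨w, h₁, h₂, h₃, -⟩ := hH.exists_common_point_four hconn h₁₂ h₁₃ h₁₃ h₂₃ h₂₃ (by simp)
  exact ⟨w, h₁, h₂, h₃⟩

theorem IsHelly.exists_adj_adj_dist_lt (hH : IsHelly G) (hconn : G.Connected) {x y b : V}
    {r : ℕ} (hxy : G.dist x y = 2) (hxb : G.dist x b = r) (hyb : G.dist y b = r) :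
    ∃ u, G.Adj x u ∧ G.Adj u y ∧ G.dist u b < r := by
  have hxy_le : G.dist x y ≤ G.dist x b + G.dist b y := hconn.dist_triangle
  obtain ⟨u, hxu, hyu, hbu⟩ := hH.exists_common_point_three hconn
    (x₁ := x) (x₂ := y) (x₃ := b) (r₁ := 1) (r₂ := 1) (r₃ := r - 1)
    (by omega) (by omega) (by omega)
  have hub : G.dist u b < r := by grind [SimpleGraph.dist_comm]
  refine ⟨u, hconn.adj_of_dist_le_one hxu ?_, (hconn.adj_of_dist_le_one hyu ?_).symm, hub⟩
  all_goals rintro rfl; omega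

theorem C4Free.eq_or_adj_of_dist_eq_two (hC4 : C4Free G) {x y u v : V}
    (hxy : G.dist x y = 2) (hxu : G.Adj x u) (huy : G.Adj u y) (hyv : G.Adj y v)
    (hvx : G.Adj v x) : u = v ∨ G.Adj u v := by
  by_contra! h
  have hxy_ne : x ≠ y := by rintro rfl; simp at hxy
  have hxy_nadj : ¬ G.Adj x y := fun hadj ↦ by simp [dist_eq_one_iff_adj.mpr hadj] at hxy
  exact hC4 ⟨x, u, y, v, hxu.ne, hxy_ne, hvx.ne.symm, huy.ne, h.1, hyv.ne, hxu, huy, hyv, hvx,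
    hxy_nadj, h.2⟩

end Helly

section Slice

variable {G : SimpleGraph V} {a b x y : V} {r : ℕ}

theorem mem_gslice_iff_of_dist_eq_two_mul (hab : G.dist a b = 2 * r) :
    x ∈ gslice G a r b ↔ G.dist a x = r ∧ G.dist x b = r := by
  simp only [gslice, Set.mem_ofPred_eq, hab]
  omega

theorem dist_ne_two_of_mem_gslice (hconn : G.Connected) (hH : IsHelly G) (hC4 : C4Free G)
    (hab : G.dist a b = 2 * r) (hx : x ∈ gslice G a r b) (hy : y ∈ gslice G a r b) :
    G.dist x y ≠ 2 := by
  rw [mem_gslice_iff_of_dist_eq_two_mul hab] at hx hy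
  intro hxy
  obtain ⟨u, hxu, huy, hub⟩ := hH.exists_adj_adj_dist_lt hconn hxy hx.2 hy.2
  obtain ⟨v, hxv, hvy, hva⟩ := hH.exists_adj_adj_dist_lt hconn hxy
    (by rw [SimpleGraph.dist_comm, hx.1]) (by rw [SimpleGraph.dist_comm, hy.1])
  have huv : G.dist u v ≤ 1 :=
    dist_le_one_of_eq_or_adj (hC4.eq_or_adj_of_dist_eq_two hxy hxu huy hvy.symm hxv.symm)
  have hab_le : G.dist a b ≤ G.dist a v + G.dist v b := hconn.dist_triangle
  have hvb_le : G.dist v b ≤ G.dist v u + G.dist u b := hconn.dist_triangle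
  grind [SimpleGraph.dist_comm]

theorem exists_mem_gslice_dist_eq_of_dist_eq_succ (hconn : G.Connected) (hH : IsHelly G)
    (hab : G.dist a b = 2 * r) (hx : x ∈ gslice G a r b) (hy : y ∈ gslice G a r b) {n : ℕ}
    (hxy : G.dist x y = n + 1) : ∃ z ∈ gslice G a r b, G.dist x z = n := by
  simp only [mem_gslice_iff_of_dist_eq_two_mul hab] at hx hy ⊢
  obtain ⟨z, hyz, hxz, haz, hbz⟩ := hH.exists_common_point_four hconn
    (x₁ := y) (x₂ := x) (x₃ := a) (x₄ := b) (r₁ := 1) (r₂ := n) (r₃ := r) (r₄ := r)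
    (by grind [SimpleGraph.dist_comm]) (by grind [SimpleGraph.dist_comm]) (by omega)
    (by grind [SimpleGraph.dist_comm]) (by omega) (by omega)
  have hxy_le : G.dist x y ≤ G.dist x z + G.dist z y := hconn.dist_triangle
  have hab_le : G.dist a b ≤ G.dist a z + G.dist z b := hconn.dist_triangle
  exact ⟨z, by grind [SimpleGraph.dist_comm]⟩

theorem isClique_gslice (hconn : G.Connected) (hH : IsHelly G) (hC4 : C4Free G)
    (hab : G.dist a b = 2 * r) : G.IsClique (gslice G a r b) := by
  intro x hx y hy hne
  by_contra hxy
  have hfar : ∀ n ≥ 2, ∀ y ∈ gslice G a r b, G.dist x y ≠ n := by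
    intro n hn
    induction n, hn using Nat.le_induction with
    | base => exact fun y hy ↦ dist_ne_two_of_mem_gslice hconn hH hC4 hab hx hy
    | succ n _ ih =>
      intro y hy hxy
      obtain ⟨z, hz, hxz⟩ := exists_mem_gslice_dist_eq_of_dist_eq_succ hconn hH hab hx hy hxy
      exact ih z hz hxz
  exact hfar _ (hconn.one_lt_dist_of_ne_of_not_adj hne hxy) y hy rfl

end Slice

section Eccentricity

variable {G : SimpleGraph V} [Fintype V]

theorem dist_le_ecc (v u : V) : G.dist v u ≤ ecc G v :=
  Finset.le_sup (f := fun u ↦ G.dist v u) (Finset.mem_univ u)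

theorem exists_dist_eq_gdiam [Nonempty V] : ∃ a b, G.dist a b = gdiam G := by
  obtain ⟨a, -, ha⟩ := Finset.exists_mem_eq_sup Finset.univ Finset.univ_nonempty (ecc G)
  obtain ⟨b, -, hb⟩ :=
    Finset.exists_mem_eq_sup Finset.univ Finset.univ_nonempty fun u ↦ G.dist a u
  exact ⟨a, b, by rw [gdiam, ha, ecc, hb]⟩

theorem gcenter_subset_gslice (hconn : G.Connected) {a b : V} (hab : G.dist a b = 2 * grad G) :
    gcenter G ⊆ gslice G a (grad G) b := by
  intro x (hx : ecc G x = grad G)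
  have hxa := dist_le_ecc (G := G) x a
  have hxb := dist_le_ecc (G := G) x b
  have hab_le : G.dist a b ≤ G.dist a x + G.dist x b := hconn.dist_triangle
  rw [mem_gslice_iff_of_dist_eq_two_mul hab]
  grind [SimpleGraph.dist_comm]

end Eccentricity

theorem stmt13_general (G : SimpleGraph V) [Fintype V] (hconn : G.Connected) (hH : IsHelly G)
    (hC4 : C4Free G) (hd : gdiam G = 2 * grad G) :
    G.IsClique (gcenter G) := by
  have := hconn.nonempty
  obtain ⟨a, b, hab⟩ := exists_dist_eq_gdiam (G := G)
  rw [hd] at hab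
  exact (isClique_gslice hconn hH hC4 hab).subset (gcenter_subset_gslice hconn hab)

/-- A finite connected C4-free Helly graph of radius `r ≥ 2` and
diameter `2r` has a clique center. -/
theorem stmt13 (G : SimpleGraph V) [Fintype V] (hconn : G.Connected) (hH : IsHelly G)
    (hC4 : C4Free G) (hr : 2 ≤ grad G) (hd : gdiam G = 2 * grad G) :
    G.IsClique (gcenter G) :=
  stmt13_general G hconn hH hC4 hd
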